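/- arXiv:2602.03341 — 7 statements merged into one kernel-verified Lean document; each statement's English description precedes it below -/
import Mathlib

section
/- If (U, p) with U = (f(θ)/r)e_r + (g(θ)/r)e_θ and p = 𝔭(θ)/r² is a smooth solution of the stationary Navier–Stokes equations in ℝ²∖{0}, then g is constant on ℝ. -/
open Real

noncomputable def pdx (f : ℝ → ℝ → ℝ) (x y : ℝ) : ℝ := deriv (fun t => f t y) x
noncomputable def pdy (f : ℝ → ℝ → ℝ) (x y : ℝ) : ℝ := deriv (fun t => f x t) y

/-- If `(U, p)` with `U = (f(θ)/r) e_r + (g(θ)/r) e_θ` and `p = P(θ)/r²` is a smooth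
solution of the stationary Navier–Stokes equations in `ℝ² ∖ {0}`, then `g` is constant. -/
theorem stmt0 (f g P : ℝ → ℝ) (u v p : ℝ → ℝ → ℝ)
    (hf : ContDiff ℝ (⊤ : ℕ∞) f) (hg : ContDiff ℝ (⊤ : ℕ∞) g) (hP : ContDiff ℝ (⊤ : ℕ∞) P)
    (hfper : ∀ θ : ℝ, f (θ + 2 * π) = f θ)
    (hgper : ∀ θ : ℝ, g (θ + 2 * π) = g θ)
    (hPper : ∀ θ : ℝ, P (θ + 2 * π) = P θ)
    (hsmooth : ContDiffOn ℝ (⊤ : ℕ∞) (fun q : ℝ × ℝ => (u q.1 q.2, v q.1 q.2, p q.1 q.2))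
      {q : ℝ × ℝ | q ≠ 0})
    (hu : ∀ r θ : ℝ, 0 < r →
      u (r * Real.cos θ) (r * Real.sin θ) = (f θ * Real.cos θ - g θ * Real.sin θ) / r)
    (hv : ∀ r θ : ℝ, 0 < r →
      v (r * Real.cos θ) (r * Real.sin θ) = (f θ * Real.sin θ + g θ * Real.cos θ) / r)
    (hp : ∀ r θ : ℝ, 0 < r →
      p (r * Real.cos θ) (r * Real.sin θ) = P θ / r ^ 2)
    (heq1 : ∀ x y : ℝ, (x, y) ≠ (0, 0) →
      -(pdx (pdx u) x y + pdy (pdy u) x y) + u x y * pdx u x y + v x y * pdy u x y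
        + pdx p x y = 0)
    (heq2 : ∀ x y : ℝ, (x, y) ≠ (0, 0) →
      -(pdx (pdx v) x y + pdy (pdy v) x y) + u x y * pdx v x y + v x y * pdy v x y
        + pdy p x y = 0)
    (heq3 : ∀ x y : ℝ, (x, y) ≠ (0, 0) → pdx u x y + pdy v x y = 0) :
    ∀ θ₁ θ₂ : ℝ, g θ₁ = g θ₂ := by
  have hopen : IsOpen {q : ℝ × ℝ | q ≠ 0} := isOpen_compl_singleton
  have key : ∀ θ : ℝ, deriv g θ = 0 := by
    intro θ
    set c := Real.cos θ with hcdef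
    set s := Real.sin θ with hsdef
    have hcs : c ^ 2 + s ^ 2 = 1 := by rw [add_comm]; exact Real.sin_sq_add_cos_sq θ
    have hP0 : ((c, s) : ℝ × ℝ) ≠ 0 := by
      intro h
      rw [Prod.ext_iff] at h
      simp only [Prod.fst_zero, Prod.snd_zero] at h
      rw [h.1, h.2] at hcs; norm_num at hcs
    have hFd : DifferentiableAt ℝ (fun q : ℝ × ℝ => (u q.1 q.2, v q.1 q.2, p q.1 q.2)) (c, s) :=
      (hsmooth.differentiableOn (by simp)).differentiableAt (hopen.mem_nhds hP0)
    have hud : DifferentiableAt ℝ (fun q : ℝ × ℝ => u q.1 q.2) (c, s) := hFd.fst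
    have hvd : DifferentiableAt ℝ (fun q : ℝ × ℝ => v q.1 q.2) (c, s) := hFd.snd.fst
    set U' := fderiv ℝ (fun q : ℝ × ℝ => u q.1 q.2) (c, s) with hU'
    set V' := fderiv ℝ (fun q : ℝ × ℝ => v q.1 q.2) (c, s) with hV'
    have hlin : ∀ (L : ℝ × ℝ →L[ℝ] ℝ) (a b : ℝ), L (a, b) = a * L (1, 0) + b * L (0, 1) := by
      intro L a b
      have h : ((a, b) : ℝ × ℝ) = a • ((1 : ℝ), (0 : ℝ)) + b • ((0 : ℝ), (1 : ℝ)) := by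
        simp [Prod.ext_iff]
      rw [h, map_add, map_smul, map_smul]; simp [smul_eq_mul]
    -- partial derivatives as U' applied to basis vectors
    have hpdxu : pdx u c s = U' (1, 0) := by
      have hcurve : HasDerivAt (fun t : ℝ => ((t, s) : ℝ × ℝ)) (1, 0) c :=
        (hasDerivAt_id c).prodMk (hasDerivAt_const c s)
      exact (hud.hasFDerivAt.comp_hasDerivAt c hcurve).deriv
    have hpdyu : pdy u c s = U' (0, 1) := by
      have hcurve : HasDerivAt (fun t : ℝ => ((c, t) : ℝ × ℝ)) (0, 1) s :=
        (hasDerivAt_const s c).prodMk (hasDerivAt_id s)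
      exact (hud.hasFDerivAt.comp_hasDerivAt s hcurve).deriv
    have hpdxv : pdx v c s = V' (1, 0) := by
      have hcurve : HasDerivAt (fun t : ℝ => ((t, s) : ℝ × ℝ)) (1, 0) c :=
        (hasDerivAt_id c).prodMk (hasDerivAt_const c s)
      exact (hvd.hasFDerivAt.comp_hasDerivAt c hcurve).deriv
    have hpdyv : pdy v c s = V' (0, 1) := by
      have hcurve : HasDerivAt (fun t : ℝ => ((c, t) : ℝ × ℝ)) (0, 1) s :=
        (hasDerivAt_const s c).prodMk (hasDerivAt_id s)
      exact (hvd.hasFDerivAt.comp_hasDerivAt s hcurve).deriv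
    -- radial derivatives
    have hcurveR : HasDerivAt (fun t : ℝ => ((t * c, t * s) : ℝ × ℝ)) (c, s) 1 := by
      have := ((hasDerivAt_id (1 : ℝ)).mul_const c).prodMk ((hasDerivAt_id (1 : ℝ)).mul_const s)
      simpa using this
    have hud1 : HasFDerivAt (fun q : ℝ × ℝ => u q.1 q.2) U' (1 * c, 1 * s) := by
      rw [one_mul, one_mul]; exact hud.hasFDerivAt
    have hvd1 : HasFDerivAt (fun q : ℝ × ℝ => v q.1 q.2) V' (1 * c, 1 * s) := by
      rw [one_mul, one_mul]; exact hvd.hasFDerivAt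
    have hradu : HasDerivAt (fun t => u (t * c) (t * s)) (U' (c, s)) 1 := by
      have h := hud1.comp_hasDerivAt 1 hcurveR; exact h
    have hradv : HasDerivAt (fun t => v (t * c) (t * s)) (V' (c, s)) 1 := by
      have h := hvd1.comp_hasDerivAt 1 hcurveR; exact h
    have hevu : (fun t => u (t * c) (t * s)) =ᶠ[nhds (1 : ℝ)]
        (fun t => (f θ * c - g θ * s) / t) := by
      filter_upwards [eventually_gt_nhds one_pos] with t ht
      exact hu t θ ht
    have hevv : (fun t => v (t * c) (t * s)) =ᶠ[nhds (1 : ℝ)]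
        (fun t => (f θ * s + g θ * c) / t) := by
      filter_upwards [eventually_gt_nhds one_pos] with t ht
      exact hv t θ ht
    have hKu : HasDerivAt (fun t : ℝ => (f θ * c - g θ * s) / t) (-(f θ * c - g θ * s)) 1 := by
      have := (hasDerivAt_inv (one_ne_zero (α := ℝ))).const_mul (f θ * c - g θ * s)
      simpa [div_eq_mul_inv] using this
    have hKv : HasDerivAt (fun t : ℝ => (f θ * s + g θ * c) / t) (-(f θ * s + g θ * c)) 1 := by
      have := (hasDerivAt_inv (one_ne_zero (α := ℝ))).const_mul (f θ * s + g θ * c)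
      simpa [div_eq_mul_inv] using this
    have hradu' : U' (c, s) = -(f θ * c - g θ * s) :=
      (hradu.congr_of_eventuallyEq hevu.symm).unique hKu
    have hradv' : V' (c, s) = -(f θ * s + g θ * c) :=
      (hradv.congr_of_eventuallyEq hevv.symm).unique hKv
    -- angular derivatives
    have hcurveA : HasDerivAt (fun t : ℝ => ((Real.cos t, Real.sin t) : ℝ × ℝ)) (-s, c) θ :=
      (Real.hasDerivAt_cos θ).prodMk (Real.hasDerivAt_sin θ)
    have hangu : HasDerivAt (fun t => u (Real.cos t) (Real.sin t)) (U' (-s, c)) θ := by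
      have h := hud.hasFDerivAt.comp_hasDerivAt θ hcurveA; exact h
    have hangv : HasDerivAt (fun t => v (Real.cos t) (Real.sin t)) (V' (-s, c)) θ := by
      have h := hvd.hasFDerivAt.comp_hasDerivAt θ hcurveA; exact h
    have heqfu : (fun t => u (Real.cos t) (Real.sin t))
        = fun t => f t * Real.cos t - g t * Real.sin t := by
      funext t; simpa using hu 1 t one_pos
    have heqfv : (fun t => v (Real.cos t) (Real.sin t))
        = fun t => f t * Real.sin t + g t * Real.cos t := by
      funext t; simpa using hv 1 t one_pos
    have hf' : HasDerivAt f (deriv f θ) θ := (hf.differentiable (by simp) θ).hasDerivAt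
    have hg' : HasDerivAt g (deriv g θ) θ := (hg.differentiable (by simp) θ).hasDerivAt
    have hEu : HasDerivAt (fun t => f t * Real.cos t - g t * Real.sin t)
        (deriv f θ * c + f θ * (-s) - (deriv g θ * s + g θ * c)) θ :=
      (hf'.mul (Real.hasDerivAt_cos θ)).sub (hg'.mul (Real.hasDerivAt_sin θ))
    have hEv : HasDerivAt (fun t => f t * Real.sin t + g t * Real.cos t)
        (deriv f θ * s + f θ * c + (deriv g θ * c + g θ * (-s))) θ :=
      (hf'.mul (Real.hasDerivAt_sin θ)).add (hg'.mul (Real.hasDerivAt_cos θ))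
    have hangu' : U' (-s, c) = deriv f θ * c + f θ * (-s) - (deriv g θ * s + g θ * c) :=
      (heqfu ▸ hangu).unique hEu
    have hangv' : V' (-s, c) = deriv f θ * s + f θ * c + (deriv g θ * c + g θ * (-s)) :=
      (heqfv ▸ hangv).unique hEv
    -- combine
    have hdiv : pdx u c s + pdy v c s = 0 := heq3 c s (by simpa [Prod.ext_iff] using hP0)
    have h1 : c * pdx u c s + s * pdy u c s = -(f θ * c - g θ * s) := by
      rw [hpdxu, hpdyu, ← hlin]; exact hradu'
    have h2 : -s * pdx u c s + c * pdy u c s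
        = deriv f θ * c + f θ * (-s) - (deriv g θ * s + g θ * c) := by
      rw [hpdxu, hpdyu, ← hlin]; exact hangu'
    have h3 : c * pdx v c s + s * pdy v c s = -(f θ * s + g θ * c) := by
      rw [hpdxv, hpdyv, ← hlin]; exact hradv'
    have h4 : -s * pdx v c s + c * pdy v c s
        = deriv f θ * s + f θ * c + (deriv g θ * c + g θ * (-s)) := by
      rw [hpdxv, hpdyv, ← hlin]; exact hangv'
    linear_combination (-(c)) * h1 + s * h2 - s * h3 - c * h4 + (c ^ 2 + s ^ 2) * hdiv
      - deriv g θ * hcs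
  exact is_const_of_deriv_eq_zero (hg.differentiable (by simp)) key
end

section
/- Let ũ be a smooth function of z on an interval I and set ṽ(z) = z ũ(z) + C₀, p̃ determined by the reduced system. If ũ, ṽ, p̃ satisfy the reduced stationary Navier–Stokes ODE system (z²+1)ũ_{zz} + zũũ_z − ũ_zṽ + 4zũ_z + ũ² + 2ũ + zp̃_z + 2p̃ = 0, (z²+1)ṽ_{zz} + zũṽ_z − ṽ_zṽ + 4zṽ_z + ũṽ + 2ṽ − p̃_z = 0, then ũ satisfies the single second-order ODE (z²+1)²ũ_{zz} + (6z − C₀)(z²+1)ũ_z + (z²+1)ũ² + 6(z²+1)ũ + 2C₀(z³+3z)/(z²+1) + 2C₁/(z²+1) = 0 for some real constant C₁, and p̃ = 2ũ + 2C₀z/(z²+1) + C₁/(z²+1). -/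
open Real Set

/-- If `ũ, ṽ = zũ + C₀, p̃` (smooth on an interval) satisfy the reduced stationary
Navier–Stokes ODE system, then `ũ` satisfies a single second-order ODE with an integration
constant `C₁`, and `p̃ = 2ũ + 2C₀z/(z²+1) + C₁/(z²+1)`. -/
theorem stmt5 (a b C₀ : ℝ) (hab : a < b) (ut vt pt : ℝ → ℝ)
    (hut : ContDiffOn ℝ (⊤ : ℕ∞) ut (Ioo a b)) (hpt : ContDiffOn ℝ (⊤ : ℕ∞) pt (Ioo a b))
    (hv : ∀ z : ℝ, vt z = z * ut z + C₀)
    (heq1 : ∀ z ∈ Ioo a b,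
      (z ^ 2 + 1) * deriv (deriv ut) z + z * ut z * deriv ut z - deriv ut z * vt z
        + 4 * z * deriv ut z + (ut z) ^ 2 + 2 * ut z + z * deriv pt z + 2 * pt z = 0)
    (heq2 : ∀ z ∈ Ioo a b,
      (z ^ 2 + 1) * deriv (deriv vt) z + z * ut z * deriv vt z - deriv vt z * vt z
        + 4 * z * deriv vt z + ut z * vt z + 2 * vt z - deriv pt z = 0) :
    ∃ C₁ : ℝ, ∀ z ∈ Ioo a b,
      ((z ^ 2 + 1) ^ 2 * deriv (deriv ut) z + (6 * z - C₀) * (z ^ 2 + 1) * deriv ut z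
          + (z ^ 2 + 1) * (ut z) ^ 2 + 6 * (z ^ 2 + 1) * ut z
          + 2 * C₀ * (z ^ 3 + 3 * z) / (z ^ 2 + 1) + 2 * C₁ / (z ^ 2 + 1) = 0) ∧
      pt z = 2 * ut z + 2 * C₀ * z / (z ^ 2 + 1) + C₁ / (z ^ 2 + 1) := by
  set I := Ioo a b with hI
  have hIo : IsOpen I := isOpen_Ioo
  -- differentiability facts
  have hut' : ContDiffOn ℝ (⊤ : ℕ∞) (deriv ut) I := hut.deriv_of_isOpen hIo (by simp)
  have du : ∀ z ∈ I, DifferentiableAt ℝ ut z := fun z hz =>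
    (hut.contDiffAt (hIo.mem_nhds hz)).differentiableAt (by simp)
  have ddu : ∀ z ∈ I, DifferentiableAt ℝ (deriv ut) z := fun z hz =>
    (hut'.contDiffAt (hIo.mem_nhds hz)).differentiableAt (by simp)
  have dp : ∀ z ∈ I, DifferentiableAt ℝ pt z := fun z hz =>
    (hpt.contDiffAt (hIo.mem_nhds hz)).differentiableAt (by simp)
  have hvf : vt = fun w => w * ut w + C₀ := funext hv
  -- derivative of vt
  have hvd : ∀ z ∈ I, deriv vt z = ut z + z * deriv ut z := by
    intro z hz
    rw [hvf]
    have h := (((hasDerivAt_id z).mul (du z hz).hasDerivAt).add_const C₀).deriv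
    simpa using h
  -- second derivative of vt
  have hvdd : ∀ z ∈ I, deriv (deriv vt) z = 2 * deriv ut z + z * deriv (deriv ut) z := by
    intro z hz
    have hev : deriv vt =ᶠ[nhds z] fun w => ut w + w * deriv ut w :=
      Filter.eventuallyEq_of_mem (hIo.mem_nhds hz) hvd
    rw [hev.deriv_eq]
    have h := ((du z hz).hasDerivAt.add ((hasDerivAt_id z).mul (ddu z hz).hasDerivAt)).deriv
    simp only [id] at h
    rw [show (fun w => ut w + w * deriv ut w) = ut + id * deriv ut from rfl, h]; ring
  -- the function that will be constant
  set g : ℝ → ℝ := fun w => (w ^ 2 + 1) * (pt w - 2 * ut w) - 2 * C₀ * w with hg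
  have hgd : ∀ z ∈ I, HasDerivAt g 0 z := by
    intro z hz
    have hpoly : HasDerivAt (fun w : ℝ => w ^ 2 + 1) (2 * z) z := by
      simpa using (hasDerivAt_pow 2 z).add_const 1
    have hin : HasDerivAt (fun w => pt w - 2 * ut w)
        (deriv pt z - 2 * deriv ut z) z :=
      (dp z hz).hasDerivAt.sub ((du z hz).hasDerivAt.const_mul 2)
    have h := (hpoly.mul hin).sub ((hasDerivAt_id z).const_mul (2 * C₀))
    have h1 := heq1 z hz
    have h2 := heq2 z hz
    rw [hv z, hvd z hz, hvdd z hz] at h2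
    rw [hv z] at h1
    have hz0 : (2 * z) * (pt z - 2 * ut z) + (z ^ 2 + 1) *
        (deriv pt z - 2 * deriv ut z) - 2 * C₀ * 1 = 0 := by
      linear_combination z * h1 - h2
    rw [hz0] at h
    exact h
  -- g is constant on I
  have hgdiff : DifferentiableOn ℝ g I := fun z hz => ((hgd z hz).differentiableAt).differentiableWithinAt
  have hgf : ∀ z ∈ I, fderivWithin ℝ g I z = 0 := by
    intro z hz
    rw [fderivWithin_of_isOpen hIo hz, (hgd z hz).hasFDerivAt.fderiv]
    ext; simp
  set m : ℝ := (a + b) / 2 with hm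
  have hmI : m ∈ I := ⟨by linarith, by linarith⟩
  have hconst : ∀ z ∈ I, g z = g m := fun z hz =>
    (convex_Ioo a b).is_const_of_fderivWithin_eq_zero hgdiff hgf hz hmI
  refine ⟨g m, fun z hz => ?_⟩
  have hne : (z : ℝ) ^ 2 + 1 ≠ 0 := by positivity
  have hgz : (z ^ 2 + 1) * (pt z - 2 * ut z) - 2 * C₀ * z = g m := hconst z hz
  have hp : pt z = 2 * ut z + 2 * C₀ * z / (z ^ 2 + 1) + g m / (z ^ 2 + 1) := by
    field_simp
    linarith [hgz]
  refine ⟨?_, hp⟩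
  have h1 := heq1 z hz
  have h2 := heq2 z hz
  rw [hv z, hvd z hz, hvdd z hz] at h2
  rw [hv z] at h1
  field_simp
  linear_combination ((z ^ 2 + 1)) * h1 + (z * (z ^ 2 + 1)) * h2 - 2 * hgz
end

section
/- If h is a C² solution of (z²+1)²h'' + 2z(z²+1)h' + h² + 4h + 2C₁ = 0 on an interval I, then there exists a constant C₂ ∈ ℝ such that (z²+1)²(h')² + (2/3)h³ + 4h² + 4C₁h + (2/3)C₂ = 0 on I; in particular, h³ + 6h² + 6C₁h + C₂ ≤ 0 on I. -/
open Real Set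

/-!
Multiplying the equation by `2h'` turns its left-hand side into the derivative of
`E = (z²+1)²(h')² + (2/3)h³ + 4h² + 4C₁h`, because `d/dz (z²+1)² = 4z(z²+1)`. Hence `E` is
constant on the interval, `C₂ := -(3/2)E` gives the first integral, and the inequality is
that identity with the nonnegative term `(z²+1)²(h')²` dropped.
-/

/-- The first integral of the equation, with `g` standing for `h'`. -/
noncomputable def firstIntegral (C₁ : ℝ) (h g : ℝ → ℝ) (z : ℝ) : ℝ :=
  (z ^ 2 + 1) ^ 2 * g z ^ 2 + (2 / 3) * h z ^ 3 + 4 * h z ^ 2 + 4 * C₁ * h z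

theorem hasDerivAt_firstIntegral (C₁ : ℝ) {h g : ℝ → ℝ} {x g' : ℝ}
    (hh : HasDerivAt h (g x) x) (hg : HasDerivAt g g' x) :
    HasDerivAt (firstIntegral C₁ h g)
      (2 * g x * ((x ^ 2 + 1) ^ 2 * g' + 2 * x * (x ^ 2 + 1) * g x
        + h x ^ 2 + 4 * h x + 2 * C₁)) x := by
  have hweight : HasDerivAt (fun z : ℝ => (z ^ 2 + 1) ^ 2) (2 * (x ^ 2 + 1) * (2 * x)) x := by
    simpa using ((hasDerivAt_pow 2 x).add_const 1).fun_pow 2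
  refine (((hweight.fun_mul (hg.fun_pow 2)).fun_add ((hh.fun_pow 3).const_mul (2 / 3))).fun_add
    ((hh.fun_pow 2).const_mul 4)).fun_add (hh.const_mul (4 * C₁)) |>.congr_deriv ?_
  ring

theorem ContDiffOn.hasDerivAt_deriv_of_isOpen {f : ℝ → ℝ} {s : Set ℝ}
    (hf : ContDiffOn ℝ 2 f s) (hs : IsOpen s) {x : ℝ} (hx : x ∈ s) :
    HasDerivAt f (deriv f x) x ∧ HasDerivAt (deriv f) (deriv (deriv f) x) x := by
  have hf' : ContDiffOn ℝ 1 (deriv f) s := hf.deriv_of_isOpen hs (by norm_num)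
  exact ⟨((hf.contDiffAt (hs.mem_nhds hx)).differentiableAt (by norm_num)).hasDerivAt,
    ((hf'.contDiffAt (hs.mem_nhds hx)).differentiableAt one_ne_zero).hasDerivAt⟩

theorem stmt7_general (a b C₁ : ℝ) (h : ℝ → ℝ)
    (hh : ContDiffOn ℝ 2 h (Ioo a b))
    (hode : ∀ z ∈ Ioo a b,
      (z ^ 2 + 1) ^ 2 * deriv (deriv h) z + 2 * z * (z ^ 2 + 1) * deriv h z
        + (h z) ^ 2 + 4 * h z + 2 * C₁ = 0) :
    ∃ C₂ : ℝ, ∀ z ∈ Ioo a b,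
      ((z ^ 2 + 1) ^ 2 * (deriv h z) ^ 2 + (2 / 3) * (h z) ^ 3 + 4 * (h z) ^ 2
          + 4 * C₁ * h z + (2 / 3) * C₂ = 0) ∧
      (h z) ^ 3 + 6 * (h z) ^ 2 + 6 * C₁ * h z + C₂ ≤ 0 := by
  have hE : ∀ x ∈ Ioo a b, HasDerivAt (firstIntegral C₁ h (deriv h)) 0 x := fun x hx => by
    obtain ⟨h₁, h₂⟩ := hh.hasDerivAt_deriv_of_isOpen isOpen_Ioo hx
    simpa [hode x hx] using hasDerivAt_firstIntegral C₁ h₁ h₂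
  obtain ⟨E, hEconst⟩ := isOpen_Ioo.exists_is_const_of_deriv_eq_zero isPreconnected_Ioo
    (fun x hx => (hE x hx).differentiableAt.differentiableWithinAt)
    (fun x hx => (hE x hx).deriv)
  refine ⟨-(3 / 2) * E, fun z hz => ?_⟩
  have hEz : firstIntegral C₁ h (deriv h) z = E := hEconst z hz
  rw [firstIntegral] at hEz
  have hweighted : 0 ≤ (z ^ 2 + 1) ^ 2 * deriv h z ^ 2 := by positivity
  constructor <;> linarith

/-- If `h` is a `C²` solution of `(z²+1)²h'' + 2z(z²+1)h' + h² + 4h + 2C₁ = 0` on an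
interval, then there exists a constant `C₂` such that
`(z²+1)²(h')² + (2/3)h³ + 4h² + 4C₁h + (2/3)C₂ = 0` there; in particular
`h³ + 6h² + 6C₁h + C₂ ≤ 0` on the interval. -/
theorem stmt7 (a b C₁ : ℝ) (hab : a < b) (h : ℝ → ℝ)
    (hh : ContDiffOn ℝ 2 h (Ioo a b))
    (hode : ∀ z ∈ Ioo a b,
      (z ^ 2 + 1) ^ 2 * deriv (deriv h) z + 2 * z * (z ^ 2 + 1) * deriv h z
        + (h z) ^ 2 + 4 * h z + 2 * C₁ = 0) :
    ∃ C₂ : ℝ, ∀ z ∈ Ioo a b,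
      ((z ^ 2 + 1) ^ 2 * (deriv h z) ^ 2 + (2 / 3) * (h z) ^ 3 + 4 * (h z) ^ 2
          + 4 * C₁ * h z + (2 / 3) * C₂ = 0) ∧
      (h z) ^ 3 + 6 * (h z) ^ 2 + 6 * C₁ * h z + C₂ ≤ 0 :=
  stmt7_general a b C₁ h hh hode
end

section
/- For C₁ = 2 and C₂ = 8, the function h(z) = −2 − 6/(arctan z + C)² solves the ODE (z²+1)²h'' + 2z(z²+1)h' + h² + 4h + 4 = 0 on any interval of z where arctan z + C ≠ 0. -/
/-!
With `θ = arctan z` one has `dθ/dz = 1/(1+z²)`, so the operator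
`(z²+1)² d²/dz² + 2z(z²+1) d/dz = (z²+1) d/dz ((z²+1) d/dz)` is just `d²/dθ²`.
In the variable `θ` the equation becomes `g'' + g² = 0` for `g = h + 2 = -6/(θ+C)²`,
which holds since `g'' = -36/(θ+C)⁴`.
-/

open Real Filter Topology

theorem hasDerivAt_div_add_const_pow (a C t : ℝ) (n : ℕ) (ht : t + C ≠ 0) :
    HasDerivAt (fun s => a / (s + C) ^ (n + 1)) (-((n + 1) * a) / (t + C) ^ (n + 2)) t := by
  have hpow : HasDerivAt (fun s => (s + C) ^ (n + 1)) ((n + 1) * (t + C) ^ n) t := by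
    simpa using ((hasDerivAt_id t).add_const C).fun_pow (n + 1)
  refine ((hasDerivAt_const t a).div hpow (pow_ne_zero _ ht)).congr_deriv ?_
  field_simp
  ring

theorem hasDerivAt_comp_arctan {F : ℝ → ℝ} {F' : ℝ} {z : ℝ} (hF : HasDerivAt F F' (arctan z)) :
    HasDerivAt (fun y => F (arctan y)) (F' / (1 + z ^ 2)) z := by
  rw [div_eq_mul_one_div]
  exact hF.comp z (hasDerivAt_arctan z)

theorem sq_mul_deriv_deriv_add_deriv_comp_arctan {F F' : ℝ → ℝ} {F'' z : ℝ}
    (hF : ∀ᶠ t in 𝓝 (arctan z), HasDerivAt F (F' t) t) (hF' : HasDerivAt F' F'' (arctan z)) :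
    (z ^ 2 + 1) ^ 2 * deriv (deriv fun y => F (arctan y)) z
      + 2 * z * (z ^ 2 + 1) * deriv (fun y => F (arctan y)) z = F'' := by
  have hpos : (1 : ℝ) + z ^ 2 ≠ 0 := by positivity
  have hderiv : deriv (fun y => F (arctan y)) =ᶠ[𝓝 z] fun y => F' (arctan y) / (1 + y ^ 2) := by
    filter_upwards [continuous_arctan.continuousAt.eventually hF] with y hy
    exact (hasDerivAt_comp_arctan hy).deriv
  have hsecond : HasDerivAt (fun y => F' (arctan y) / (1 + y ^ 2))
      ((F'' / (1 + z ^ 2) * (1 + z ^ 2) - F' (arctan z) * (2 * z)) / (1 + z ^ 2) ^ 2) z := by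
    have hsq : HasDerivAt (fun y : ℝ => 1 + y ^ 2) (2 * z) z := by
      simpa using (hasDerivAt_pow 2 z).const_add 1
    exact (hasDerivAt_comp_arctan hF').div hsq hpos
  rw [hderiv.deriv_eq, hsecond.deriv, (hasDerivAt_comp_arctan hF.self_of_nhds).deriv]
  field_simp
  ring

/-- For `C₁ = 2`, `C₂ = 8`, the function `h(z) = −2 − 6/(arctan z + C)²` solves
`(z²+1)²h'' + 2z(z²+1)h' + h² + 4h + 4 = 0` wherever `arctan z + C ≠ 0`. -/
theorem stmt13 (C : ℝ) :
    let h : ℝ → ℝ := fun z => -2 - 6 / (Real.arctan z + C) ^ 2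
    ∀ z : ℝ, Real.arctan z + C ≠ 0 →
      (z ^ 2 + 1) ^ 2 * deriv (deriv h) z + 2 * z * (z ^ 2 + 1) * deriv h z
        + (h z) ^ 2 + 4 * h z + 4 = 0 := by
  intro h z hz
  have hF : ∀ᶠ t in 𝓝 (arctan z),
      HasDerivAt (fun s => -2 - 6 / (s + C) ^ 2) (12 / (t + C) ^ 3) t := by
    filter_upwards [(continuous_add_const C).continuousAt.eventually_ne hz] with t ht
    exact ((hasDerivAt_div_add_const_pow 6 C t 1 ht).const_sub (-2)).congr_deriv (by ring)
  have hF' : HasDerivAt (fun t => 12 / (t + C) ^ 3) (-36 / (arctan z + C) ^ 4) (arctan z) :=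
    (hasDerivAt_div_add_const_pow 12 C (arctan z) 2 hz).congr_deriv (by ring)
  have hode := sq_mul_deriv_deriv_add_deriv_comp_arctan hF hF'
  simp only [h] at hode ⊢
  rw [hode]
  field_simp
  ring
end

section
/- Let C₁ < 2, B = √(2(2−C₁)), A = (2−C₁)^{1/4}/2. Then h(z) = −2 + 2B − 3B·tanh²(A(8^{1/4} arctan z + C)) solves the ODE (z²+1)²h'' + 2z(z²+1)h' + h² + 4h + 2C₁ = 0, where C₂ := 12C₁ − 16 − 4(2−C₁)√(2(2−C₁)) is the associated energy constant, in the sense that (z²+1)²(h')² + (2/3)h³ + 4h² + 4C₁h + (2/3)C₂ = 0 holds for all z ∈ ℝ. -/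
/-!
Put `t = tanh u` with `u = A (8^{1/4} arctan z + C)`. Since `arctan' z = 1/(z²+1)` and
`tanh' = 1 - tanh²`, the factor `(z²+1)` cancels: `(z²+1) h' = -6 B A 8^{1/4} t (1 - t²)`, and
`A² 8^{1/2} = B/2`. The identity thus becomes a polynomial identity in `t` and `B`, which holds
modulo `B² = 2(2 - C₁)`.
-/

open Real

theorem Real.hasDerivAt_tanh (x : ℝ) : HasDerivAt tanh (1 - tanh x ^ 2) x := by
  have hcosh : cosh x ≠ 0 := (cosh_pos x).ne'
  have hquot := (hasDerivAt_sinh x).div (hasDerivAt_cosh x) hcosh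
  have hval : (cosh x * cosh x - sinh x * sinh x) / cosh x ^ 2 = 1 - tanh x ^ 2 := by
    rw [tanh_eq_sinh_div_cosh]
    field_simp
  rw [hval] at hquot
  exact hquot.congr_of_eventuallyEq (.of_forall tanh_eq_sinh_div_cosh)

theorem hasDerivAt_tanh_affine_arctan (a k c z : ℝ) :
    HasDerivAt (fun z => tanh (a * (k * arctan z + c)))
      ((1 - tanh (a * (k * arctan z + c)) ^ 2) * (a * k) / (z ^ 2 + 1)) z := by
  have hinner := (((hasDerivAt_arctan z).const_mul k).add_const c).const_mul a
  refine ((hasDerivAt_tanh _).comp z hinner).congr_deriv ?_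
  rw [add_comm (z ^ 2)]
  ring

theorem sq_rpow_quarter {x : ℝ} (hx : 0 ≤ x) : (x ^ ((1 : ℝ) / 4)) ^ 2 = √x := by
  rw [← rpow_natCast, ← rpow_mul hx, sqrt_eq_rpow]
  norm_num

theorem sq_rpow_quarter_div_two_mul_sq_eight_rpow_quarter {x : ℝ} (hx : 0 ≤ x) :
    (x ^ ((1 : ℝ) / 4) / 2) ^ 2 * ((8 : ℝ) ^ ((1 : ℝ) / 4)) ^ 2 = √(2 * x) / 2 := by
  have h8 : √(8 : ℝ) = 2 * √2 := by
    rw [show (8 : ℝ) = 2 ^ 2 * 2 by norm_num, sqrt_mul (by norm_num), sqrt_sq (by norm_num)]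
  rw [div_pow, sq_rpow_quarter hx, sq_rpow_quarter (by norm_num), h8,
    sqrt_mul (by norm_num)]
  ring

theorem energy_identity_of_sq_eq {c b t : ℝ} (hb : b ^ 2 = 2 * (2 - c)) :
    let h := -2 + 2 * b - 3 * b * t ^ 2
    (6 * b * t * (1 - t ^ 2)) ^ 2 * (b / 2) + 2 / 3 * h ^ 3 + 4 * h ^ 2 + 4 * c * h
      + 2 / 3 * (12 * c - 16 - 4 * (2 - c) * b) = 0 := by
  intro h
  linear_combination (4 * h + 8 + 8 * b / 3) / 2 * hb

/-- For `C₁ < 2`, `B = √(2(2−C₁))`, `A = (2−C₁)^{1/4}/2`, the function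
`h(z) = −2 + 2B − 3B tanh²(A(8^{1/4} arctan z + C))` satisfies the first-integral identity
`(z²+1)²(h')² + (2/3)h³ + 4h² + 4C₁h + (2/3)C₂ = 0` with
`C₂ = 12C₁ − 16 − 4(2−C₁)√(2(2−C₁))`, for all `z ∈ ℝ`. -/
theorem stmt14 (C₁ C : ℝ) (h1 : C₁ < 2) :
    let B : ℝ := Real.sqrt (2 * (2 - C₁))
    let A : ℝ := (2 - C₁) ^ ((1 : ℝ) / 4) / 2
    let C₂ : ℝ := 12 * C₁ - 16 - 4 * (2 - C₁) * Real.sqrt (2 * (2 - C₁))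
    let h : ℝ → ℝ := fun z =>
      -2 + 2 * B - 3 * B * Real.tanh (A * ((8 : ℝ) ^ ((1 : ℝ) / 4) * Real.arctan z + C)) ^ 2
    ∀ z : ℝ,
      (z ^ 2 + 1) ^ 2 * (deriv h z) ^ 2 + (2 / 3) * (h z) ^ 3 + 4 * (h z) ^ 2
        + 4 * C₁ * h z + (2 / 3) * C₂ = 0 := by
  intro B A C₂ h z
  set k : ℝ := (8 : ℝ) ^ ((1 : ℝ) / 4)
  set t := tanh (A * (k * arctan z + C))
  have hderiv : (z ^ 2 + 1) * deriv h z = -(6 * B * t * (1 - t ^ 2)) * (A * k) := by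
    have hh : HasDerivAt h _ z :=
      (((hasDerivAt_tanh_affine_arctan A k C z).pow 2).const_mul (3 * B)).const_sub (-2 + 2 * B)
    rw [hh.deriv]
    field_simp
    ring
  have hAk : A ^ 2 * k ^ 2 = B / 2 :=
    sq_rpow_quarter_div_two_mul_sq_eight_rpow_quarter (sub_nonneg.mpr h1.le)
  have hB : B ^ 2 = 2 * (2 - C₁) := sq_sqrt (by linarith)
  calc (z ^ 2 + 1) ^ 2 * deriv h z ^ 2 + 2 / 3 * h z ^ 3 + 4 * h z ^ 2 + 4 * C₁ * h z + 2 / 3 * C₂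
      = (6 * B * t * (1 - t ^ 2)) ^ 2 * (A ^ 2 * k ^ 2) + 2 / 3 * h z ^ 3 + 4 * h z ^ 2
          + 4 * C₁ * h z + 2 / 3 * (12 * C₁ - 16 - 4 * (2 - C₁) * B) := by
        rw [mul_pow, ← mul_pow, hderiv]
        ring
    _ = 0 := by
        rw [hAk]
        exact energy_identity_of_sq_eq hB
end

section
/- Let C₀ ≠ 0 and C₁ be real with C₀² ≤ 4 − 2C₁, and set C̃₁ = −2 + √(4 − C₀² − 2C₁) (or −2 − √(4 − C₀² − 2C₁)). Then the linear function h_L(z) = −C₀z + C̃₁ solves the ODE (z²+1)²h'' + (2z − C₀)(z²+1)h' + h² + (2C₀z + 4)h + 2C₀z³ + 6C₀z + 2C₁ = 0 on ℝ. -/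
open Real

/-- For `C₀ ≠ 0`, `C₀² ≤ 4 − 2C₁` and `C̃₁ = −2 ± √(4 − C₀² − 2C₁)`, the linear function
`h_L(z) = −C₀ z + C̃₁` solves
`(z²+1)²h'' + (2z−C₀)(z²+1)h' + h² + (2C₀z+4)h + 2C₀z³ + 6C₀z + 2C₁ = 0` on `ℝ`. -/
theorem stmt17 (C₀ C₁ Ct : ℝ) (h0 : C₀ ≠ 0) (hle : C₀ ^ 2 ≤ 4 - 2 * C₁)
    (hCt : Ct = -2 + Real.sqrt (4 - C₀ ^ 2 - 2 * C₁) ∨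
           Ct = -2 - Real.sqrt (4 - C₀ ^ 2 - 2 * C₁)) :
    let hL : ℝ → ℝ := fun z => -C₀ * z + Ct
    ∀ z : ℝ,
      (z ^ 2 + 1) ^ 2 * deriv (deriv hL) z + (2 * z - C₀) * (z ^ 2 + 1) * deriv hL z
        + (hL z) ^ 2 + (2 * C₀ * z + 4) * hL z + 2 * C₀ * z ^ 3 + 6 * C₀ * z
        + 2 * C₁ = 0 := by
  intro hL z
  have hkey : (Ct + 2) ^ 2 = 4 - C₀ ^ 2 - 2 * C₁ := by
    have hnn : (0:ℝ) ≤ 4 - C₀ ^ 2 - 2 * C₁ := by linarith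
    rcases hCt with h | h <;> rw [h] <;>
      simp [add_sq, sub_sq, Real.sq_sqrt hnn] <;> ring
  have hd1 : deriv hL = fun _ : ℝ => -C₀ := by
    funext x
    exact (((hasDerivAt_id x).const_mul (-C₀)).add_const Ct).deriv.trans (mul_one _)
  rw [hd1]
  simp only [deriv_const', hL]
  nlinarith [hkey]
end

section
/- Let C₀ ≠ 0. If H is a C² solution of H'' − C₀H' + H² + (6C₀²/25)H = 0 on an interval, then the quantity (H' − (2C₀/5)H)² + (2/3)H³ equals C₂·exp((6C₀/5)θ) for some constant C₂; i.e., the derivative of exp(−(6C₀/5)θ)·((H' − (2C₀/5)H)² + (2/3)H³) vanishes identically. -/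
open Real Set

/-!
With `u = H' − (2C₀/5)H` the equation becomes `u' = (3C₀/5)u − H²`, and then
`E = u² + (2/3)H³` satisfies the linear equation `E' = (6C₀/5)E`. Hence `exp(−(6C₀/5)θ)E`
has zero derivative and is constant on the interval.
-/

theorem hasDerivAt_exp_neg_mul_mul_eq_zero {f : ℝ → ℝ} {k x : ℝ}
    (hf : HasDerivAt f (k * f x) x) :
    HasDerivAt (fun t => exp (-k * t) * f t) 0 x := by
  have hexp : HasDerivAt (fun t => exp (-k * t)) (exp (-k * x) * -k) x := by
    simpa using ((hasDerivAt_id x).const_mul (-k)).exp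
  refine (hexp.mul hf).congr_deriv ?_
  ring

theorem hasDerivAt_lienard_energy {C₀ θ H'' : ℝ} {H H' : ℝ → ℝ}
    (hH : HasDerivAt H (H' θ) θ) (hH' : HasDerivAt H' H'' θ)
    (hode : H'' - C₀ * H' θ + H θ ^ 2 + (6 * C₀ ^ 2 / 25) * H θ = 0) :
    HasDerivAt (fun t => (H' t - (2 * C₀ / 5) * H t) ^ 2 + (2 / 3) * H t ^ 3)
      ((6 * C₀ / 5) * ((H' θ - (2 * C₀ / 5) * H θ) ^ 2 + (2 / 3) * H θ ^ 3)) θ := by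
  have hH'' : H'' = C₀ * H' θ - H θ ^ 2 - (6 * C₀ ^ 2 / 25) * H θ := by linear_combination hode
  refine (((hH'.sub (hH.const_mul (2 * C₀ / 5))).pow 2).add
    ((hH.pow 3).const_mul (2 / 3))).congr_deriv ?_
  simp only [Pi.sub_apply, hH'']
  ring

theorem ContDiffOn.hasDerivAt_deriv_deriv {f : ℝ → ℝ} {s : Set ℝ} {x : ℝ}
    (hf : ContDiffOn ℝ 2 f s) (hs : IsOpen s) (hx : x ∈ s) :
    HasDerivAt (deriv f) (deriv (deriv f) x) x :=
  (((hf.deriv_of_isOpen hs (by norm_num : (1 : WithTop ℕ∞) + 1 ≤ 2)).contDiffAt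
    (hs.mem_nhds hx)).differentiableAt one_ne_zero).hasDerivAt

theorem stmt19_general (C₀ a b : ℝ) (H : ℝ → ℝ)
    (hH : ContDiffOn ℝ 2 H (Ioo a b))
    (hode : ∀ θ ∈ Ioo a b,
      deriv (deriv H) θ - C₀ * deriv H θ + (H θ) ^ 2 + (6 * C₀ ^ 2 / 25) * H θ = 0) :
    (∀ θ ∈ Ioo a b,
      deriv (fun t => Real.exp (-(6 * C₀ / 5) * t) *
        ((deriv H t - (2 * C₀ / 5) * H t) ^ 2 + (2 / 3) * (H t) ^ 3)) θ = 0) ∧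
    ∃ C₂ : ℝ, ∀ θ ∈ Ioo a b,
      (deriv H θ - (2 * C₀ / 5) * H θ) ^ 2 + (2 / 3) * (H θ) ^ 3 =
        C₂ * Real.exp ((6 * C₀ / 5) * θ) := by
  have hconst : ∀ θ ∈ Ioo a b, HasDerivAt (fun t => Real.exp (-(6 * C₀ / 5) * t) *
      ((deriv H t - (2 * C₀ / 5) * H t) ^ 2 + (2 / 3) * (H t) ^ 3)) 0 θ := fun θ hθ =>
    hasDerivAt_exp_neg_mul_mul_eq_zero <| hasDerivAt_lienard_energy
      ((hH.contDiffAt (isOpen_Ioo.mem_nhds hθ)).differentiableAt two_ne_zero).hasDerivAt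
      (hH.hasDerivAt_deriv_deriv isOpen_Ioo hθ) (hode θ hθ)
  refine ⟨fun θ hθ => (hconst θ hθ).deriv, ?_⟩
  obtain ⟨C₂, hC₂⟩ := isOpen_Ioo.exists_is_const_of_deriv_eq_zero isPreconnected_Ioo
    (fun θ hθ => (hconst θ hθ).differentiableAt.differentiableWithinAt)
    (fun θ hθ => (hconst θ hθ).deriv)
  refine ⟨C₂, fun θ hθ => ?_⟩
  rw [← hC₂ θ hθ, mul_right_comm, ← Real.exp_add]
  simp

/-- First integral of the integrable Liénard equation: if `H` is a `C²` solution of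
`H'' − C₀H' + H² + (6C₀²/25)H = 0` on an interval, then
`exp(−(6C₀/5)θ)((H' − (2C₀/5)H)² + (2/3)H³)` has vanishing derivative there, so
`(H' − (2C₀/5)H)² + (2/3)H³ = C₂ exp((6C₀/5)θ)` for some constant `C₂`. -/
theorem stmt19 (C₀ a b : ℝ) (h0 : C₀ ≠ 0) (hab : a < b) (H : ℝ → ℝ)
    (hH : ContDiffOn ℝ 2 H (Ioo a b))
    (hode : ∀ θ ∈ Ioo a b,
      deriv (deriv H) θ - C₀ * deriv H θ + (H θ) ^ 2 + (6 * C₀ ^ 2 / 25) * H θ = 0) :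
    (∀ θ ∈ Ioo a b,
      deriv (fun t => Real.exp (-(6 * C₀ / 5) * t) *
        ((deriv H t - (2 * C₀ / 5) * H t) ^ 2 + (2 / 3) * (H t) ^ 3)) θ = 0) ∧
    ∃ C₂ : ℝ, ∀ θ ∈ Ioo a b,
      (deriv H θ - (2 * C₀ / 5) * H θ) ^ 2 + (2 / 3) * (H θ) ^ 3 =
        C₂ * Real.exp ((6 * C₀ / 5) * θ) :=
  stmt19_general C₀ a b H hH hode
end
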